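/- Let Z be standard normal, X_z = (Z - z conditioned on Z > z), and m(z) = E[X_z]. For every δ with 0 < δ < 1 there exists a constant c(δ) > 0 such that for all z ∈ ℝ: P(m(z) < X_z < (1+δ)m(z)) ≥ c(δ) and P((1-δ)m(z) < X_z < m(z)) ≥ c(δ). -/

import Mathlib

open MeasureTheory Set

/-- The density on `(0,∞)` of `X_z = (Z - z | Z > z)` for a standard normal `Z`. -/
noncomputable def condDens (z x : ℝ) : ℝ :=
  Real.exp (-(x + z) ^ 2 / 2) / (∫ t in Set.Ioi z, Real.exp (-t ^ 2 / 2))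

/-- The conditional mean overshoot `m z = E[X_z]`. -/
noncomputable def condMean (z : ℝ) : ℝ :=
  Real.exp (-z ^ 2 / 2) / (∫ t in Set.Ioi z, Real.exp (-t ^ 2 / 2)) - z

/-!
Write `G z = ∫_z^∞ e^{-t²/2} dt` and `q = e^{-z²/2} / G z` (the inverse Mills ratio), so that
`m = q - z` and `X_z` has density `e^{-(x+z)²/2} / G z` on `(0, ∞)`.

For `z ≤ 0` we have `1 ≤ G z ≤ 3`, `0 < q ≤ 1` and `m ≥ 1/4`, so the density is at least
`e^{-1}/3` within `1/4` of `m`.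

For `z ≥ 0` we have `1/4 ≤ m q ≤ 1`. The upper bound is `Var X_z = 1 - m q ≥ 0`; the lower
bound comes from splitting `G z` at `z + 1/(2q)`: the part near `z` is at most
`e^{-z²/2}/(2q) = G z / 2`, the rest at most `2q ∫_z^∞ (t - z) e^{-t²/2} dt = 2 m q G z`.
Since `(2m + z)² = z² + 4 m q ≤ z² + 4`, the density is at least `q e^{-2}` on `[0, 2m]`, so
both intervals of length `δ m` carry mass at least `δ m q e^{-2} ≥ δ e^{-2}/4`.
-/

open Real

noncomputable def gaussTail (z : ℝ) : ℝ := ∫ t in Ioi z, exp (-t ^ 2 / 2)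

noncomputable def invMillsRatio (z : ℝ) : ℝ := exp (-z ^ 2 / 2) / gaussTail z

lemma condDens_eq (z x : ℝ) : condDens z x = exp (-(x + z) ^ 2 / 2) / gaussTail z := rfl

lemma condMean_eq (z : ℝ) : condMean z = invMillsRatio z - z := rfl

lemma integrable_pow_mul_exp_neg_sq_div_two (n : ℕ) :
    Integrable fun t : ℝ => t ^ n * exp (-t ^ 2 / 2) := by
  have h := integrable_rpow_mul_exp_neg_mul_sq (b := 1 / 2) (by norm_num)
    (s := n) (by linarith [n.cast_nonneg (α := ℝ)])
  refine h.congr (ae_of_all _ fun t => ?_)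
  simp only [rpow_natCast]
  ring_nf

lemma integrable_exp_neg_sq_div_two : Integrable fun t : ℝ => exp (-t ^ 2 / 2) := by
  simpa using integrable_pow_mul_exp_neg_sq_div_two 0

lemma integrable_mul_exp_neg_sq_div_two : Integrable fun t : ℝ => t * exp (-t ^ 2 / 2) := by
  simpa using integrable_pow_mul_exp_neg_sq_div_two 1

lemma setIntegral_Ioi_deriv_eq_neg {f f' : ℝ → ℝ} (hderiv : ∀ x, HasDerivAt f (f' x) x)
    (hf : Integrable f) (hf' : Integrable f') (z : ℝ) :
    ∫ x in Ioi z, f' x = -f z := by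
  have hlim := tendsto_zero_of_hasDerivAt_of_integrableOn_Ioi (a := z) (fun x _ => hderiv x)
    hf'.integrableOn hf.integrableOn
  rw [integral_Ioi_of_hasDerivAt_of_tendsto' (fun x _ => hderiv x) hf'.integrableOn hlim,
    zero_sub]

lemma hasDerivAt_exp_neg_sq_div_two (t : ℝ) :
    HasDerivAt (fun s : ℝ => exp (-s ^ 2 / 2)) (-t * exp (-t ^ 2 / 2)) t := by
  have h : HasDerivAt (fun s : ℝ => -s ^ 2 / 2) (-t) t :=
    ((hasDerivAt_pow 2 t).neg.div_const 2).congr_deriv (by push_cast; ring)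
  simpa [mul_comm] using h.exp

lemma setIntegral_Ioi_mul_exp_neg_sq_div_two (z : ℝ) :
    ∫ t in Ioi z, t * exp (-t ^ 2 / 2) = exp (-z ^ 2 / 2) := by
  have hderiv (t : ℝ) : HasDerivAt (fun s => -exp (-s ^ 2 / 2)) (t * exp (-t ^ 2 / 2)) t :=
    (hasDerivAt_exp_neg_sq_div_two t).neg.congr_deriv (by ring)
  rw [setIntegral_Ioi_deriv_eq_neg hderiv integrable_exp_neg_sq_div_two.neg
    integrable_mul_exp_neg_sq_div_two z, neg_neg]

lemma setIntegral_Ioi_sq_mul_exp_neg_sq_div_two (z : ℝ) :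
    ∫ t in Ioi z, t ^ 2 * exp (-t ^ 2 / 2) = z * exp (-z ^ 2 / 2) + gaussTail z := by
  have hderiv (t : ℝ) : HasDerivAt (fun s => -(s * exp (-s ^ 2 / 2)))
      (t ^ 2 * exp (-t ^ 2 / 2) - exp (-t ^ 2 / 2)) t :=
    ((hasDerivAt_id t).mul (hasDerivAt_exp_neg_sq_div_two t)).neg.congr_deriv
      (by simp only [id]; ring)
  have h := setIntegral_Ioi_deriv_eq_neg hderiv integrable_mul_exp_neg_sq_div_two.neg
    ((integrable_pow_mul_exp_neg_sq_div_two 2).sub integrable_exp_neg_sq_div_two) z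
  rw [integral_sub (integrable_pow_mul_exp_neg_sq_div_two 2).integrableOn
    integrable_exp_neg_sq_div_two.integrableOn, neg_neg] at h
  rw [gaussTail]
  linarith

lemma gaussTail_pos (z : ℝ) : 0 < gaussTail z := by
  rw [gaussTail, setIntegral_pos_iff_support_of_nonneg_ae
    (ae_of_all _ fun t => (exp_pos _).le) integrable_exp_neg_sq_div_two.integrableOn]
  simp [Function.support, exp_ne_zero]

lemma gaussTail_le_three (z : ℝ) : gaussTail z ≤ 3 := by
  have hfull : ∫ t : ℝ, exp (-t ^ 2 / 2) = √(2 * π) := by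
    simpa [div_eq_inv_mul, neg_mul, div_inv_eq_mul, mul_comm] using integral_gaussian (1 / 2)
  calc gaussTail z ≤ ∫ t : ℝ, exp (-t ^ 2 / 2) :=
        setIntegral_le_integral integrable_exp_neg_sq_div_two
          (ae_of_all _ fun t => (exp_pos _).le)
    _ = √(2 * π) := hfull
    _ ≤ √(3 ^ 2) := sqrt_le_sqrt (by nlinarith [pi_lt_four])
    _ = 3 := sqrt_sq (by norm_num)

lemma one_le_gaussTail_of_nonpos {z : ℝ} (hz : z ≤ 0) : 1 ≤ gaussTail z := by
  have hzero : gaussTail 0 = √(2 * π) / 2 := by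
    rw [gaussTail]
    simpa [div_eq_inv_mul, neg_mul, div_inv_eq_mul, mul_comm] using integral_gaussian_Ioi (1 / 2)
  calc (1 : ℝ) = √(2 ^ 2) / 2 := by rw [sqrt_sq (by norm_num)]; norm_num
    _ ≤ √(2 * π) / 2 := by gcongr; nlinarith [pi_gt_three]
    _ = gaussTail 0 := hzero.symm
    _ ≤ gaussTail z := setIntegral_mono_set integrable_exp_neg_sq_div_two.integrableOn
        (ae_of_all _ fun t => (exp_pos _).le) (Ioi_subset_Ioi hz).eventuallyLE

lemma invMillsRatio_pos (z : ℝ) : 0 < invMillsRatio z := div_pos (exp_pos _) (gaussTail_pos z)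

lemma invMillsRatio_mul_gaussTail (z : ℝ) : invMillsRatio z * gaussTail z = exp (-z ^ 2 / 2) :=
  div_mul_cancel₀ _ (gaussTail_pos z).ne'

lemma setIntegral_Ioi_sub_mul_exp_neg_sq_div_two (z : ℝ) :
    ∫ t in Ioi z, (t - z) * exp (-t ^ 2 / 2) = condMean z * gaussTail z := by
  simp_rw [sub_mul]
  rw [integral_sub integrable_mul_exp_neg_sq_div_two.integrableOn
    (integrable_exp_neg_sq_div_two.integrableOn.const_mul z), integral_const_mul,
    setIntegral_Ioi_mul_exp_neg_sq_div_two, condMean_eq, sub_mul, invMillsRatio_mul_gaussTail,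
    gaussTail]

lemma condMean_mul_invMillsRatio_le_one (z : ℝ) : condMean z * invMillsRatio z ≤ 1 := by
  set q := invMillsRatio z
  have hvar : 0 ≤ ∫ t in Ioi z, (t - q) ^ 2 * exp (-t ^ 2 / 2) :=
    setIntegral_nonneg measurableSet_Ioi fun t _ => by positivity
  have hexpand : ∫ t in Ioi z, (t - q) ^ 2 * exp (-t ^ 2 / 2)
      = z * exp (-z ^ 2 / 2) - 2 * q * exp (-z ^ 2 / 2) + (1 + q ^ 2) * gaussTail z := by
    have hpoint : ∀ t : ℝ, (t - q) ^ 2 * exp (-t ^ 2 / 2) = t ^ 2 * exp (-t ^ 2 / 2)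
        - 2 * q * (t * exp (-t ^ 2 / 2)) + q ^ 2 * exp (-t ^ 2 / 2) := fun t => by ring
    have h2 := (integrable_pow_mul_exp_neg_sq_div_two 2).integrableOn (s := Ioi z)
    have h1 := (integrable_mul_exp_neg_sq_div_two.integrableOn (s := Ioi z)).const_mul (2 * q)
    have h0 := (integrable_exp_neg_sq_div_two.integrableOn (s := Ioi z)).const_mul (q ^ 2)
    have h21 : IntegrableOn (fun t => t ^ 2 * exp (-t ^ 2 / 2) - 2 * q * (t * exp (-t ^ 2 / 2)))
        (Ioi z) := h2.sub h1
    simp_rw [hpoint]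
    rw [integral_add h21 h0, integral_sub h2 h1, integral_const_mul, integral_const_mul,
      setIntegral_Ioi_sq_mul_exp_neg_sq_div_two, setIntegral_Ioi_mul_exp_neg_sq_div_two,
      ← gaussTail]
    ring
  have hG := gaussTail_pos z
  rw [hexpand, ← invMillsRatio_mul_gaussTail] at hvar
  rw [condMean_eq]
  nlinarith

lemma integrable_sub_mul_exp_neg_sq_div_two (z : ℝ) :
    Integrable fun t : ℝ => (t - z) * exp (-t ^ 2 / 2) :=
  (integrable_mul_exp_neg_sq_div_two.sub (integrable_exp_neg_sq_div_two.const_mul z)).congr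
    (ae_of_all _ fun t => (sub_mul t z _).symm)

lemma gaussTail_le_mul_add_div {z ε : ℝ} (hz : 0 ≤ z) (hε : 0 < ε) :
    gaussTail z ≤ ε * exp (-z ^ 2 / 2) + condMean z * gaussTail z / ε := by
  have hint := integrable_exp_neg_sq_div_two.integrableOn (s := Ioc z (z + ε))
  have hsplit : gaussTail z = (∫ t in Ioc z (z + ε), exp (-t ^ 2 / 2)) + gaussTail (z + ε) := by
    rw [gaussTail, gaussTail, ← Ioc_union_Ioi_eq_Ioi (by linarith : z ≤ z + ε),
      setIntegral_union (Ioc_disjoint_Ioi le_rfl) measurableSet_Ioi hint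
        integrable_exp_neg_sq_div_two.integrableOn]
  have hnear : ∫ t in Ioc z (z + ε), exp (-t ^ 2 / 2) ≤ ε * exp (-z ^ 2 / 2) := by
    calc ∫ t in Ioc z (z + ε), exp (-t ^ 2 / 2) ≤ ∫ _ in Ioc z (z + ε), exp (-z ^ 2 / 2) :=
          setIntegral_mono_on hint (integrableOn_const (by simp)) measurableSet_Ioc
            fun t ht => exp_le_exp.2 (by nlinarith [ht.1])
      _ = ε * exp (-z ^ 2 / 2) := by
          rw [setIntegral_const, Real.volume_real_Ioc_of_le (by linarith), smul_eq_mul]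
          ring
  have hfar : gaussTail (z + ε) ≤ condMean z * gaussTail z / ε := by
    have hint' :=
      ((integrable_sub_mul_exp_neg_sq_div_two z).div_const ε).integrableOn (s := Ioi z)
    rw [← setIntegral_Ioi_sub_mul_exp_neg_sq_div_two, ← integral_div]
    calc gaussTail (z + ε) ≤ ∫ t in Ioi (z + ε), (t - z) * exp (-t ^ 2 / 2) / ε :=
          setIntegral_mono_on integrable_exp_neg_sq_div_two.integrableOn
            (hint'.mono_set (Ioi_subset_Ioi (by linarith))) measurableSet_Ioi fun t ht => by
              rw [le_div_iff₀ hε]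
              nlinarith [exp_pos (-t ^ 2 / 2), mem_Ioi.1 ht]
      _ ≤ ∫ t in Ioi z, (t - z) * exp (-t ^ 2 / 2) / ε :=
          setIntegral_mono_set hint'
            ((ae_restrict_iff' measurableSet_Ioi).2 (ae_of_all _ fun t ht =>
              div_nonneg (mul_nonneg (sub_nonneg.2 (le_of_lt ht)) (exp_pos _).le) hε.le))
            (Ioi_subset_Ioi (by linarith)).eventuallyLE
  linarith

lemma quarter_le_condMean_mul_invMillsRatio {z : ℝ} (hz : 0 ≤ z) :
    1 / 4 ≤ condMean z * invMillsRatio z := by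
  have hG := gaussTail_pos z
  have hφ := exp_pos (-z ^ 2 / 2)
  have h := gaussTail_le_mul_add_div hz (div_pos hG (mul_pos two_pos hφ))
  have e1 : gaussTail z / (2 * exp (-z ^ 2 / 2)) * exp (-z ^ 2 / 2) = gaussTail z / 2 := by
    field_simp
  have e2 : condMean z * gaussTail z / (gaussTail z / (2 * exp (-z ^ 2 / 2)))
      = 2 * (condMean z * exp (-z ^ 2 / 2)) := by
    field_simp
  rw [e1, e2] at h
  rw [invMillsRatio, mul_div_assoc', le_div_iff₀ hG]
  linarith

lemma mul_le_setIntegral_Ioo {f : ℝ → ℝ} (hf : Continuous f) (hf0 : ∀ x, 0 ≤ f x)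
    {a b a' ℓ c : ℝ} (hℓ : 0 ≤ ℓ) (ha : a ≤ a') (hb : a' + ℓ ≤ b)
    (hc : ∀ x ∈ Icc a' (a' + ℓ), c ≤ f x) :
    ℓ * c ≤ ∫ x in Ioo a b, f x := by
  have hint : IntegrableOn f (Ioo a' (a' + ℓ)) :=
    hf.integrableOn_Icc.mono_set Ioo_subset_Icc_self
  calc ℓ * c = c * volume.real (Ioo a' (a' + ℓ)) := by
        rw [Real.volume_real_Ioo_of_le (by linarith)]; ring
    _ ≤ ∫ x in Ioo a' (a' + ℓ), f x := setIntegral_ge_of_const_le_real measurableSet_Ioo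
        (by simp) (fun x hx => hc x (Ioo_subset_Icc_self hx)) hint
    _ ≤ ∫ x in Ioo a b, f x := setIntegral_mono_set
        (hf.integrableOn_Icc.mono_set Ioo_subset_Icc_self) (ae_of_all _ hf0)
        (Ioo_subset_Ioo ha hb).eventuallyLE

lemma continuous_condDens (z : ℝ) : Continuous (condDens z) := by
  unfold condDens; fun_prop

lemma condDens_nonneg (z x : ℝ) : 0 ≤ condDens z x :=
  div_nonneg (exp_pos _).le (gaussTail_pos z).le

lemma invMillsRatio_le_one_of_nonpos {z : ℝ} (hz : z ≤ 0) : invMillsRatio z ≤ 1 :=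
  (div_le_one (gaussTail_pos z)).2
    ((exp_le_one_iff.2 (by nlinarith)).trans (one_le_gaussTail_of_nonpos hz))

lemma quarter_le_condMean_of_nonpos {z : ℝ} (hz : z ≤ 0) : 1 / 4 ≤ condMean z := by
  have hq : exp (-z ^ 2 / 2) / 3 ≤ invMillsRatio z :=
    div_le_div_of_nonneg_left (exp_pos _).le (gaussTail_pos z) (gaussTail_le_three z)
  rw [condMean_eq]
  rcases le_total z (-1 / 4) with hz' | hz'
  · linarith [invMillsRatio_pos z]
  · nlinarith [add_one_le_exp (-z ^ 2 / 2)]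

lemma exp_neg_one_div_three_le_condDens_of_nonpos {z x : ℝ} (hz : z ≤ 0)
    (hx₁ : condMean z - 1 / 4 ≤ x) (hx₂ : x ≤ condMean z + 1 / 4) :
    exp (-1) / 3 ≤ condDens z x := by
  have hq₀ := invMillsRatio_pos z
  have hq₁ := invMillsRatio_le_one_of_nonpos hz
  have hxz : x + z = (x - condMean z) + invMillsRatio z := by rw [condMean_eq]; ring
  rw [condDens_eq]
  refine div_le_div₀ (exp_pos _).le (exp_le_exp.2 ?_) (gaussTail_pos z) (gaussTail_le_three z)
  rw [hxz]
  nlinarith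

lemma invMillsRatio_mul_exp_neg_two_le_condDens_of_nonneg {z x : ℝ} (hz : 0 ≤ z) (hx0 : 0 ≤ x)
    (hx : x ≤ 2 * condMean z) : invMillsRatio z * exp (-2) ≤ condDens z x := by
  have hmq := condMean_mul_invMillsRatio_le_one z
  have hq : condMean z + z = invMillsRatio z := by rw [condMean_eq]; ring
  rw [invMillsRatio, condDens_eq, div_mul_eq_mul_div, ← exp_add]
  refine div_le_div_of_nonneg_right (exp_le_exp.2 ?_) (gaussTail_pos z).le
  nlinarith

lemma condDens_mass_near_mean_of_nonpos {δ z : ℝ} (hδ₀ : 0 < δ) (hδ₁ : δ ≤ 1)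
    (hz : z ≤ 0) :
    δ * exp (-1) / 12 ≤ ∫ t in Ioo (condMean z) ((1 + δ) * condMean z), condDens z t ∧
    δ * exp (-1) / 12 ≤ ∫ t in Ioo ((1 - δ) * condMean z) (condMean z), condDens z t := by
  have hm := quarter_le_condMean_of_nonpos hz
  have hc (x : ℝ) (hx : x ∈ Icc (condMean z - 1 / 4) (condMean z + 1 / 4)) :=
    exp_neg_one_div_three_le_condDens_of_nonpos hz hx.1 hx.2
  rw [show δ * exp (-1) / 12 = δ / 4 * (exp (-1) / 3) by ring]
  constructor
  · exact mul_le_setIntegral_Ioo (continuous_condDens z) (condDens_nonneg z) (by positivity)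
      le_rfl (by nlinarith) fun x hx => hc x ⟨by linarith [hx.1], by linarith [hx.2]⟩
  · exact mul_le_setIntegral_Ioo (a' := condMean z - δ / 4) (continuous_condDens z)
      (condDens_nonneg z) (by positivity) (by nlinarith) (by linarith)
      fun x hx => hc x ⟨by linarith [hx.1], by linarith [hx.2]⟩

lemma condDens_mass_near_mean_of_nonneg {δ z : ℝ} (hδ₀ : 0 < δ) (hδ₁ : δ ≤ 1)
    (hz : 0 ≤ z) :
    δ * exp (-2) / 4 ≤ ∫ t in Ioo (condMean z) ((1 + δ) * condMean z), condDens z t ∧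
    δ * exp (-2) / 4 ≤ ∫ t in Ioo ((1 - δ) * condMean z) (condMean z), condDens z t := by
  have hmq := quarter_le_condMean_mul_invMillsRatio hz
  have hq := invMillsRatio_pos z
  have hm : 0 < condMean z := pos_of_mul_pos_left (by linarith) hq.le
  have hc (x : ℝ) (hx : x ∈ Icc 0 (2 * condMean z)) :=
    invMillsRatio_mul_exp_neg_two_le_condDens_of_nonneg hz hx.1 hx.2
  have hconst : δ * exp (-2) / 4 ≤ δ * condMean z * (invMillsRatio z * exp (-2)) := by
    nlinarith [mul_le_mul_of_nonneg_left hmq (mul_pos hδ₀ (exp_pos (-2))).le]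
  constructor
  · exact hconst.trans (mul_le_setIntegral_Ioo (continuous_condDens z) (condDens_nonneg z)
      (by positivity) le_rfl (by linarith)
      fun x hx => hc x ⟨by linarith [hx.1], by nlinarith [hx.2]⟩)
  · exact hconst.trans (mul_le_setIntegral_Ioo (continuous_condDens z) (condDens_nonneg z)
      (by positivity) le_rfl (by linarith)
      fun x hx => hc x ⟨by nlinarith [hx.1], by nlinarith [hx.2]⟩)

theorem condDens_mass_near_mean :
    ∀ δ : ℝ, 0 < δ → δ < 1 → ∃ c > (0 : ℝ), ∀ z : ℝ,
      c ≤ (∫ t in Set.Ioo (condMean z) ((1 + δ) * condMean z), condDens z t) ∧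
      c ≤ (∫ t in Set.Ioo ((1 - δ) * condMean z) (condMean z), condDens z t) := by
  intro δ hδ₀ hδ₁
  refine ⟨δ * exp (-2) / 12, by positivity, fun z => ?_⟩
  rcases le_total z 0 with hz | hz
  · obtain ⟨h₁, h₂⟩ := condDens_mass_near_mean_of_nonpos hδ₀ hδ₁.le hz
    have hc : δ * exp (-2) / 12 ≤ δ * exp (-1) / 12 := by gcongr; norm_num
    exact ⟨hc.trans h₁, hc.trans h₂⟩
  · obtain ⟨h₁, h₂⟩ := condDens_mass_near_mean_of_nonneg hδ₀ hδ₁.le hz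
    have hc : δ * exp (-2) / 12 ≤ δ * exp (-2) / 4 := by gcongr; norm_num
    exact ⟨hc.trans h₁, hc.trans h₂⟩
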